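/- arXiv:1905.11434 — 2 statements merged into one kernel-verified Lean document; each statement's English description precedes it below -/
import Mathlib

section
/- Assume the set-monotonicity condition μ({ω : M1(ω) ∉ m_a and M0(ω) ∈ m_a}) = 0 and that P(Y ∉ y_a, M ∈ m_a | X=0) − P(Y ∉ y_a, M ∈ m_a | X=1) > 0. Then μ({M1 ∈ m_a} ∩ {M0 ∈ m_a}) > 0 and [P(Y ∉ y_a, M ∈ m_a | X=0) − P(Y ∉ y_a, M ∈ m_a | X=1)] / P(M ∈ m_a | X=0) ≤ [μ(Y1 ∈ y_a, Y0 ∉ y_a, M1 ∈ m_a, M0 ∈ m_a) − μ(Y1 ∉ y_a, Y0 ∈ y_a, M1 ∈ m_a, M0 ∈ m_a)] / μ({M1 ∈ m_a} ∩ {M0 ∈ m_a}); moreover the right-hand side equals P(Y1 ∈ y_a, Y0 ∉ y_a | M1 ∈ m_a, M0 ∈ m_a) − P(Y1 ∉ y_a, Y0 ∈ y_a | M1 ∈ m_a, M0 ∈ m_a), where P(A | B) := μ(A ∩ B)/μ(B). -/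
open MeasureTheory ProbabilityTheory

/-- Conditional probability `P(A | B) = mu(A ∩ B) / mu(B)` as a real number. -/
noncomputable def condP {Ω : Type*} [MeasurableSpace Ω] (μ : Measure Ω)
    (A B : Set Ω) : ℝ :=
  (μ (A ∩ B)).toReal / (μ B).toReal

/-! Randomization and consistency turn each observed conditional probability given `X = x` into
the probability of the same event for `(Y_x, M_x)`. Let `S = {M1 ∈ m_a, M0 ∈ m_a}`. Monotonicity
makes `{M0 ∈ m_a}` almost surely equal to `S`, so `μ(Y0 ∉ y_a, M0 ∈ m_a)` splits along `Y1` as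
`μ(S, Y1 ∈ y_a, Y0 ∉ y_a) + μ(S, Y1 ∉ y_a, Y0 ∉ y_a)`, while `μ(Y1 ∉ y_a, M1 ∈ m_a)` is at least
`μ(S, Y1 ∉ y_a, Y0 ∈ y_a) + μ(S, Y1 ∉ y_a, Y0 ∉ y_a)`. Subtracting bounds the observed numerator by
the principal-stratum one, and the denominators are both `μ(S)`. -/

section

variable {Ω : Type*} [MeasurableSpace Ω] {μ : Measure Ω}

lemma condP_eq_measureReal_of_indepFun [IsFiniteMeasure μ] {α β : Type*} [MeasurableSpace α]
    [MeasurableSpace β] {X : Ω → β} {V : Ω → α} (hXV : IndepFun X V μ) {s : Set β}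
    (hs : MeasurableSet s) (hμs : μ (X ⁻¹' s) ≠ 0) {A : Set Ω} {C : Set α}
    (hC : MeasurableSet C) (hA : ∀ ω, X ω ∈ s → (ω ∈ A ↔ V ω ∈ C)) :
    condP μ A (X ⁻¹' s) = μ.real (V ⁻¹' C) := by
  have hAs : A ∩ X ⁻¹' s = X ⁻¹' s ∩ V ⁻¹' C := by
    ext ω
    simp only [Set.mem_inter_iff, Set.mem_preimage]
    constructor
    · exact fun ⟨hωA, hωs⟩ => ⟨hωs, (hA ω hωs).mp hωA⟩
    · exact fun ⟨hωs, hωC⟩ => ⟨(hA ω hωs).mpr hωC, hωs⟩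
  have hμs' : (μ (X ⁻¹' s)).toReal ≠ 0 := ENNReal.toReal_ne_zero.mpr ⟨hμs, measure_ne_top μ _⟩
  rw [condP, hAs, hXV.measure_inter_preimage_eq_mul s C hs hC, ENNReal.toReal_mul,
    mul_div_cancel_left₀ _ hμs', measureReal_def]

lemma measure_setOf_eq_zero_ne_zero_of_le_one [IsProbabilityMeasure μ] {X : Ω → ℕ}
    (hX : ∀ ω, X ω ≤ 1) (hX1 : μ {ω | X ω = 1} < 1) : μ {ω | X ω = 0} ≠ 0 := by
  intro hX0
  have hcompl : {ω | X ω = 0}ᶜ ⊆ {ω | X ω = 1} := fun ω hω => by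
    have := hX ω; simp only [Set.mem_compl_iff, Set.mem_ofPred_eq] at hω ⊢; omega
  refine hX1.not_ge ?_
  calc 1 = μ ({ω | X ω = 0} ∪ {ω | X ω = 0}ᶜ) := by rw [Set.union_compl_self, measure_univ]
    _ ≤ μ {ω | X ω = 0} + μ {ω | X ω = 0}ᶜ := measure_union_le _ _
    _ ≤ μ {ω | X ω = 1} := by rw [hX0, zero_add]; exact measure_mono hcompl

variable {A₁ A₀ T₁ T₀ : Set Ω}

lemma inter_ae_eq_of_ae_le (hT : T₀ ≤ᵐ[μ] T₁) (s : Set Ω) :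
    (s ∩ (T₁ ∩ T₀) : Set Ω) =ᵐ[μ] (s ∩ T₀ : Set Ω) :=
  ae_eq_set_inter (Filter.EventuallyEq.refl _ s)
    (hT.mono fun _ h => propext ⟨And.right, fun h₀ => ⟨h h₀, h₀⟩⟩)

lemma measureReal_compl_inter_sub_le [IsFiniteMeasure μ] (hA₁ : MeasurableSet A₁)
    (hA₀ : MeasurableSet A₀) (hT : T₀ ≤ᵐ[μ] T₁) :
    μ.real (A₀ᶜ ∩ T₀) - μ.real (A₁ᶜ ∩ T₁)
      ≤ μ.real (A₁ ∩ (A₀ᶜ ∩ (T₁ ∩ T₀))) - μ.real (A₁ᶜ ∩ (A₀ ∩ (T₁ ∩ T₀))) := by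
  have hsplit₀ : μ.real (A₀ᶜ ∩ T₀)
      = μ.real (A₁ ∩ (A₀ᶜ ∩ (T₁ ∩ T₀))) + μ.real (A₁ᶜ ∩ (A₀ᶜ ∩ (T₁ ∩ T₀))) := by
    rw [← measureReal_congr (inter_ae_eq_of_ae_le hT A₀ᶜ),
      ← measureReal_inter_add_sdiff (s := A₀ᶜ ∩ (T₁ ∩ T₀)) hA₁, Set.inter_comm,
      Set.sdiff_eq_compl_inter]
  have hsplit₁ : μ.real (A₁ᶜ ∩ (A₀ ∩ (T₁ ∩ T₀))) + μ.real (A₁ᶜ ∩ (A₀ᶜ ∩ (T₁ ∩ T₀)))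
      ≤ μ.real (A₁ᶜ ∩ T₁) := by
    calc _ = μ.real (A₁ᶜ ∩ (T₁ ∩ T₀)) := by
          rw [← measureReal_inter_add_sdiff (s := A₁ᶜ ∩ (T₁ ∩ T₀)) hA₀]
          congr 2 <;> ext ω <;>
            simp only [Set.mem_inter_iff, Set.mem_sdiff, Set.mem_compl_iff] <;> tauto
      _ ≤ μ.real (A₁ᶜ ∩ T₁) :=
          measureReal_mono (Set.inter_subset_inter_right _ Set.inter_subset_left)
  linarith

end

theorem statement18_general
    {Ω : Type*} [MeasurableSpace Ω] (μ : Measure Ω) [IsProbabilityMeasure μ]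
    {ny nm : ℕ}
    (Y1 Y0 Y : Ω → (Fin ny → ℝ)) (M1 M0 M : Ω → (Fin nm → ℝ)) (X : Ω → ℕ)
    (hY1meas : Measurable Y1) (hY0meas : Measurable Y0)
    (hXbin : ∀ ω, X ω ≤ 1)
    (hXpos : 0 < μ {ω | X ω = 1}) (hXlt : μ {ω | X ω = 1} < 1)
    (hindep : IndepFun X (fun ω => (Y1 ω, Y0 ω, M1 ω, M0 ω)) μ)
    (hYcons1 : ∀ ω, X ω = 1 → Y ω = Y1 ω)
    (hYcons0 : ∀ ω, X ω = 0 → Y ω = Y0 ω)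
    (hMcons1 : ∀ ω, X ω = 1 → M ω = M1 ω)
    (hMcons0 : ∀ ω, X ω = 0 → M ω = M0 ω)
    (ya : Set (Fin ny → ℝ)) (ma : Set (Fin nm → ℝ))
    (hya : MeasurableSet ya) (hma : MeasurableSet ma)
    (hmono : μ {ω | M1 ω ∉ ma ∧ M0 ω ∈ ma} = 0)
    (hemp : condP μ {ω | Y ω ∉ ya ∧ M ω ∈ ma} {ω | X ω = 0}
        - condP μ {ω | Y ω ∉ ya ∧ M ω ∈ ma} {ω | X ω = 1} > 0) :
    0 < μ ({ω | M1 ω ∈ ma} ∩ {ω | M0 ω ∈ ma}) ∧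
    (condP μ {ω | Y ω ∉ ya ∧ M ω ∈ ma} {ω | X ω = 0}
        - condP μ {ω | Y ω ∉ ya ∧ M ω ∈ ma} {ω | X ω = 1})
      / condP μ {ω | M ω ∈ ma} {ω | X ω = 0}
      ≤ ((μ {ω | Y1 ω ∈ ya ∧ Y0 ω ∉ ya ∧ M1 ω ∈ ma ∧ M0 ω ∈ ma}).toReal - (μ {ω | Y1 ω ∉ ya ∧ Y0 ω ∈ ya ∧ M1 ω ∈ ma ∧ M0 ω ∈ ma}).toReal)
        / (μ ({ω | M1 ω ∈ ma} ∩ {ω | M0 ω ∈ ma})).toReal ∧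
    ((μ {ω | Y1 ω ∈ ya ∧ Y0 ω ∉ ya ∧ M1 ω ∈ ma ∧ M0 ω ∈ ma}).toReal - (μ {ω | Y1 ω ∉ ya ∧ Y0 ω ∈ ya ∧ M1 ω ∈ ma ∧ M0 ω ∈ ma}).toReal)
      / (μ ({ω | M1 ω ∈ ma} ∩ {ω | M0 ω ∈ ma})).toReal
      = condP μ {ω | Y1 ω ∈ ya ∧ Y0 ω ∉ ya} {ω | M1 ω ∈ ma ∧ M0 ω ∈ ma}
        - condP μ {ω | Y1 ω ∉ ya ∧ Y0 ω ∈ ya} {ω | M1 ω ∈ ma ∧ M0 ω ∈ ma} := by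
  have hX0 := measure_setOf_eq_zero_ne_zero_of_le_one hXbin hXlt
  have obs₀ : condP μ {ω | Y ω ∉ ya ∧ M ω ∈ ma} {ω | X ω = 0}
      = μ.real {ω | Y0 ω ∉ ya ∧ M0 ω ∈ ma} :=
    condP_eq_measureReal_of_indepFun hindep (measurableSet_singleton 0) hX0
      (C := {p | p.2.1 ∉ ya ∧ p.2.2.2 ∈ ma}) (by measurability)
      fun ω hω => by simp [hYcons0 ω hω, hMcons0 ω hω]
  have obs₁ : condP μ {ω | Y ω ∉ ya ∧ M ω ∈ ma} {ω | X ω = 1}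
      = μ.real {ω | Y1 ω ∉ ya ∧ M1 ω ∈ ma} :=
    condP_eq_measureReal_of_indepFun hindep (measurableSet_singleton 1) hXpos.ne'
      (C := {p | p.1 ∉ ya ∧ p.2.2.1 ∈ ma}) (by measurability)
      fun ω hω => by simp [hYcons1 ω hω, hMcons1 ω hω]
  have obsM : condP μ {ω | M ω ∈ ma} {ω | X ω = 0} = μ.real {ω | M0 ω ∈ ma} :=
    condP_eq_measureReal_of_indepFun hindep (measurableSet_singleton 0) hX0
      (C := {p | p.2.2.2 ∈ ma}) (by measurability) fun ω hω => by simp [hMcons0 ω hω]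
  have hT : {ω | M0 ω ∈ ma} ≤ᵐ[μ] {ω | M1 ω ∈ ma} := by
    rwa [ae_le_set, Set.sdiff_eq, Set.inter_comm]
  have hbound : μ.real {ω | Y0 ω ∉ ya ∧ M0 ω ∈ ma} - μ.real {ω | Y1 ω ∉ ya ∧ M1 ω ∈ ma}
      ≤ (μ {ω | Y1 ω ∈ ya ∧ Y0 ω ∉ ya ∧ M1 ω ∈ ma ∧ M0 ω ∈ ma}).toReal
        - (μ {ω | Y1 ω ∉ ya ∧ Y0 ω ∈ ya ∧ M1 ω ∈ ma ∧ M0 ω ∈ ma}).toReal :=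
    measureReal_compl_inter_sub_le (hY1meas hya) (hY0meas hya) hT
  have hS : μ.real {ω | M0 ω ∈ ma} = (μ ({ω | M1 ω ∈ ma} ∩ {ω | M0 ω ∈ ma})).toReal :=
    measureReal_congr (by simpa using (inter_ae_eq_of_ae_le hT Set.univ).symm)
  have hP : 0 < (μ {ω | Y1 ω ∈ ya ∧ Y0 ω ∉ ya ∧ M1 ω ∈ ma ∧ M0 ω ∈ ma}).toReal := by
    linarith [ENNReal.toReal_nonneg (a := μ {ω | Y1 ω ∉ ya ∧ Y0 ω ∈ ya ∧ M1 ω ∈ ma ∧ M0 ω ∈ ma})]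
  refine ⟨(ENNReal.toReal_pos_iff.mp hP).1.trans_le (measure_mono fun ω h => ⟨h.2.2.1, h.2.2.2⟩),
    ?_, ?_⟩
  · rw [obs₀, obs₁, obsM, hS]
    exact div_le_div_of_nonneg_right hbound ENNReal.toReal_nonneg
  · rw [condP, condP, ← sub_div]
    congr 4 <;> ext ω <;> simp only [Set.mem_inter_iff, Set.mem_ofPred_eq, and_assoc]

theorem statement18
    {Ω : Type*} [MeasurableSpace Ω] (μ : Measure Ω) [IsProbabilityMeasure μ]
    {ny nm : ℕ} (hny : 0 < ny) (hnm : 0 < nm)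
    (Y1 Y0 Y : Ω → (Fin ny → ℝ)) (M1 M0 M : Ω → (Fin nm → ℝ)) (X : Ω → ℕ)
    (hY1meas : Measurable Y1) (hY0meas : Measurable Y0)
    (hM1meas : Measurable M1) (hM0meas : Measurable M0)
    (hXmeas : Measurable X) (hXbin : ∀ ω, X ω ≤ 1)
    (hXpos : 0 < μ {ω | X ω = 1}) (hXlt : μ {ω | X ω = 1} < 1)
    (hindep : IndepFun X (fun ω => (Y1 ω, Y0 ω, M1 ω, M0 ω)) μ)
    (hYcons1 : ∀ ω, X ω = 1 → Y ω = Y1 ω)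
    (hYcons0 : ∀ ω, X ω = 0 → Y ω = Y0 ω)
    (hMcons1 : ∀ ω, X ω = 1 → M ω = M1 ω)
    (hMcons0 : ∀ ω, X ω = 0 → M ω = M0 ω)
    (ya : Set (Fin ny → ℝ)) (ma : Set (Fin nm → ℝ))
    (hya : MeasurableSet ya) (hma : MeasurableSet ma)
    (hmono : μ {ω | M1 ω ∉ ma ∧ M0 ω ∈ ma} = 0)
    (hemp : condP μ {ω | Y ω ∉ ya ∧ M ω ∈ ma} {ω | X ω = 0}
        - condP μ {ω | Y ω ∉ ya ∧ M ω ∈ ma} {ω | X ω = 1} > 0) :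
    0 < μ ({ω | M1 ω ∈ ma} ∩ {ω | M0 ω ∈ ma}) ∧
    (condP μ {ω | Y ω ∉ ya ∧ M ω ∈ ma} {ω | X ω = 0}
        - condP μ {ω | Y ω ∉ ya ∧ M ω ∈ ma} {ω | X ω = 1})
      / condP μ {ω | M ω ∈ ma} {ω | X ω = 0}
      ≤ ((μ {ω | Y1 ω ∈ ya ∧ Y0 ω ∉ ya ∧ M1 ω ∈ ma ∧ M0 ω ∈ ma}).toReal - (μ {ω | Y1 ω ∉ ya ∧ Y0 ω ∈ ya ∧ M1 ω ∈ ma ∧ M0 ω ∈ ma}).toReal)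
        / (μ ({ω | M1 ω ∈ ma} ∩ {ω | M0 ω ∈ ma})).toReal ∧
    ((μ {ω | Y1 ω ∈ ya ∧ Y0 ω ∉ ya ∧ M1 ω ∈ ma ∧ M0 ω ∈ ma}).toReal - (μ {ω | Y1 ω ∉ ya ∧ Y0 ω ∈ ya ∧ M1 ω ∈ ma ∧ M0 ω ∈ ma}).toReal)
      / (μ ({ω | M1 ω ∈ ma} ∩ {ω | M0 ω ∈ ma})).toReal
      = condP μ {ω | Y1 ω ∈ ya ∧ Y0 ω ∉ ya} {ω | M1 ω ∈ ma ∧ M0 ω ∈ ma}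
        - condP μ {ω | Y1 ω ∉ ya ∧ Y0 ω ∈ ya} {ω | M1 ω ∈ ma ∧ M0 ω ∈ ma} :=
  statement18_general μ Y1 Y0 Y M1 M0 M X hY1meas hY0meas hXbin hXpos hXlt hindep hYcons1 hYcons0
    hMcons1 hMcons0 ya ma hya hma hmono hemp
end

section
/- Define r := μ(Y1 ∉ y_a, Y0 ∉ y_a, M1 ∉ m_a, M0 ∈ m_a) + μ(Y1 ∈ y_a, Y0 ∉ y_a, M1 ∉ m_a, M0 ∈ m_a) − μ(Y1 ∉ y_a, Y0 ∉ y_a, M1 ∈ m_a, M0 ∉ m_a) − μ(Y1 ∉ y_a, Y0 ∈ y_a, M1 ∈ m_a, M0 ∉ m_a), and q := μ({M1 ∉ m_a} ∩ {M0 ∈ m_a}). Then: (i) P(Y ∉ y_a, M ∈ m_a | X=0) − P(Y ∉ y_a, M ∈ m_a | X=1) − r = μ(Y1 ∈ y_a, Y0 ∉ y_a, M1 ∈ m_a, M0 ∈ m_a) − μ(Y1 ∉ y_a, Y0 ∈ y_a, M1 ∈ m_a, M0 ∈ m_a); and (ii) if μ({M1 ∈ m_a} ∩ {M0 ∈ m_a})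 > 0, then [P(Y ∉ y_a, M ∈ m_a | X=0) − P(Y ∉ y_a, M ∈ m_a | X=1) − r] / [P(M ∈ m_a | X=0) − q] = [μ(Y1 ∈ y_a, Y0 ∉ y_a, M1 ∈ m_a, M0 ∈ m_a) − μ(Y1 ∉ y_a, Y0 ∈ y_a, M1 ∈ m_a, M0 ∈ m_a)] / μ({M1 ∈ m_a} ∩ {M0 ∈ m_a}), and this common value equals P(Y1 ∈ y_a, Y0 ∉ y_a | M1 ∈ m_a, M0 ∈ m_a) − P(Y1 ∉ y_a, Y0 ∈ y_a | M1 ∈ m_a, M0 ∈ m_a), where P(A | B) := μ(A ∩ B)/μ(B) and μ(Y1 ∈ A, Y0 ∈ B, M1 ∈ C, M0 ∈ D) abbreviates the measure of the corresponding intersection of preimages. -/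
open MeasureTheory ProbabilityTheory

lemma split2' {Ω : Type*} [MeasurableSpace Ω] (μ : Measure Ω) [IsProbabilityMeasure μ]
    (s t : Set Ω) (ht : MeasurableSet t) :
    (μ s).toReal = (μ (s ∩ t)).toReal + (μ (s ∩ tᶜ)).toReal := by
  rw [← ENNReal.toReal_add (measure_ne_top _ _) (measure_ne_top _ _)]
  congr 1
  rw [← Set.diff_eq]
  exact (measure_inter_add_diff s ht).symm

lemma split4' {Ω : Type*} [MeasurableSpace Ω] (μ : Measure Ω) [IsProbabilityMeasure μ]
    (s t u : Set Ω) (ht : MeasurableSet t) (hu : MeasurableSet u) :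
    (μ s).toReal = (μ (s ∩ t ∩ u)).toReal + (μ (s ∩ t ∩ uᶜ)).toReal
      + (μ (s ∩ tᶜ ∩ u)).toReal + (μ (s ∩ tᶜ ∩ uᶜ)).toReal := by
  have h1 := split2' μ s t ht
  have h2 := split2' μ (s ∩ t) u hu
  have h3 := split2' μ (s ∩ tᶜ) u hu
  linarith

theorem statement19
    {Ω : Type*} [MeasurableSpace Ω] (μ : Measure Ω) [IsProbabilityMeasure μ]
    {ny nm : ℕ} (hny : 0 < ny) (hnm : 0 < nm)
    (Y1 Y0 Y : Ω → (Fin ny → ℝ)) (M1 M0 M : Ω → (Fin nm → ℝ)) (X : Ω → ℕ)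
    (hY1meas : Measurable Y1) (hY0meas : Measurable Y0)
    (hM1meas : Measurable M1) (hM0meas : Measurable M0)
    (hXmeas : Measurable X) (hXbin : ∀ ω, X ω ≤ 1)
    (hXpos : 0 < μ {ω | X ω = 1}) (hXlt : μ {ω | X ω = 1} < 1)
    (hindep : IndepFun X (fun ω => (Y1 ω, Y0 ω, M1 ω, M0 ω)) μ)
    (hYcons1 : ∀ ω, X ω = 1 → Y ω = Y1 ω)
    (hYcons0 : ∀ ω, X ω = 0 → Y ω = Y0 ω)
    (hMcons1 : ∀ ω, X ω = 1 → M ω = M1 ω)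
    (hMcons0 : ∀ ω, X ω = 0 → M ω = M0 ω)
    (ya : Set (Fin ny → ℝ)) (ma : Set (Fin nm → ℝ))
    (hya : MeasurableSet ya) (hma : MeasurableSet ma)
    (r : ℝ)
    (hr : r = (μ {ω | Y1 ω ∉ ya ∧ Y0 ω ∉ ya ∧ M1 ω ∉ ma ∧ M0 ω ∈ ma}).toReal
        + (μ {ω | Y1 ω ∈ ya ∧ Y0 ω ∉ ya ∧ M1 ω ∉ ma ∧ M0 ω ∈ ma}).toReal
        - (μ {ω | Y1 ω ∉ ya ∧ Y0 ω ∉ ya ∧ M1 ω ∈ ma ∧ M0 ω ∉ ma}).toReal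
        - (μ {ω | Y1 ω ∉ ya ∧ Y0 ω ∈ ya ∧ M1 ω ∈ ma ∧ M0 ω ∉ ma}).toReal)
    (q : ℝ) (hq : q = (μ ({ω | M1 ω ∉ ma} ∩ {ω | M0 ω ∈ ma})).toReal) :
    (condP μ {ω | Y ω ∉ ya ∧ M ω ∈ ma} {ω | X ω = 0}
        - condP μ {ω | Y ω ∉ ya ∧ M ω ∈ ma} {ω | X ω = 1} - r
      = (μ {ω | Y1 ω ∈ ya ∧ Y0 ω ∉ ya ∧ M1 ω ∈ ma ∧ M0 ω ∈ ma}).toReal - (μ {ω | Y1 ω ∉ ya ∧ Y0 ω ∈ ya ∧ M1 ω ∈ ma ∧ M0 ω ∈ ma}).toReal) ∧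
    (0 < μ ({ω | M1 ω ∈ ma} ∩ {ω | M0 ω ∈ ma}) →
      (condP μ {ω | Y ω ∉ ya ∧ M ω ∈ ma} {ω | X ω = 0}
          - condP μ {ω | Y ω ∉ ya ∧ M ω ∈ ma} {ω | X ω = 1} - r)
        / (condP μ {ω | M ω ∈ ma} {ω | X ω = 0} - q)
        = ((μ {ω | Y1 ω ∈ ya ∧ Y0 ω ∉ ya ∧ M1 ω ∈ ma ∧ M0 ω ∈ ma}).toReal - (μ {ω | Y1 ω ∉ ya ∧ Y0 ω ∈ ya ∧ M1 ω ∈ ma ∧ M0 ω ∈ ma}).toReal)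
          / (μ ({ω | M1 ω ∈ ma} ∩ {ω | M0 ω ∈ ma})).toReal ∧
      ((μ {ω | Y1 ω ∈ ya ∧ Y0 ω ∉ ya ∧ M1 ω ∈ ma ∧ M0 ω ∈ ma}).toReal - (μ {ω | Y1 ω ∉ ya ∧ Y0 ω ∈ ya ∧ M1 ω ∈ ma ∧ M0 ω ∈ ma}).toReal)
        / (μ ({ω | M1 ω ∈ ma} ∩ {ω | M0 ω ∈ ma})).toReal
        = condP μ {ω | Y1 ω ∈ ya ∧ Y0 ω ∉ ya} {ω | M1 ω ∈ ma ∧ M0 ω ∈ ma}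
          - condP μ {ω | Y1 ω ∉ ya ∧ Y0 ω ∈ ya} {ω | M1 ω ∈ ma ∧ M0 ω ∈ ma}) := by
  classical
  have hind : ∀ (x : ℕ) (s1 s2 : Set (Fin ny → ℝ)) (s3 s4 : Set (Fin nm → ℝ)) (E : Set Ω),
      MeasurableSet s1 → MeasurableSet s2 → MeasurableSet s3 → MeasurableSet s4 →
      E = {ω | Y1 ω ∈ s1 ∧ Y0 ω ∈ s2 ∧ M1 ω ∈ s3 ∧ M0 ω ∈ s4} →
      μ ({ω | X ω = x} ∩ E) = μ {ω | X ω = x} * μ E := by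
    intro x s1 s2 s3 s4 E h1 h2 h3 h4 hE
    have key := hindep.measure_inter_preimage_eq_mul ({x} : Set ℕ)
      (s1 ×ˢ s2 ×ˢ s3 ×ˢ s4) (measurableSet_singleton x)
      (h1.prod (h2.prod (h3.prod h4)))
    have e1 : X ⁻¹' ({x} : Set ℕ) = {ω | X ω = x} := by ext ω; simp
    have e2 : (fun ω => (Y1 ω, Y0 ω, M1 ω, M0 ω)) ⁻¹' (s1 ×ˢ s2 ×ˢ s3 ×ˢ s4) = E := by
      rw [hE]; ext ω; simp [Set.mem_prod]
    rw [e1, e2] at key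
    exact key
  have hp1ne : (μ {ω | X ω = 1}).toReal ≠ 0 :=
    ENNReal.toReal_ne_zero.mpr ⟨hXpos.ne', measure_ne_top μ _⟩
  have mX1 : MeasurableSet {ω | X ω = 1} := hXmeas (measurableSet_singleton 1)
  have hset0 : {ω | X ω = 0} = {ω | X ω = 1}ᶜ := by
    ext ω
    have := hXbin ω
    simp only [Set.mem_setOf_eq, Set.mem_compl_iff]
    omega
  have hp0pos : 0 < μ {ω | X ω = 0} := by
    rw [hset0, prob_compl_eq_one_sub mX1]
    exact tsub_pos_of_lt hXlt
  have hp0ne : (μ {ω | X ω = 0}).toReal ≠ 0 :=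
    ENNReal.toReal_ne_zero.mpr ⟨hp0pos.ne', measure_ne_top μ _⟩
  -- consistency set identities
  have hA1 : {ω | Y ω ∉ ya ∧ M ω ∈ ma} ∩ {ω | X ω = 1}
      = {ω | X ω = 1} ∩ {ω | Y1 ω ∉ ya ∧ M1 ω ∈ ma} := by
    ext ω
    simp only [Set.mem_inter_iff, Set.mem_setOf_eq]
    constructor
    · rintro ⟨⟨hy, hm⟩, hx⟩
      exact ⟨hx, by rwa [← hYcons1 ω hx], by rwa [← hMcons1 ω hx]⟩
    · rintro ⟨hx, hy, hm⟩
      exact ⟨⟨by rwa [hYcons1 ω hx], by rwa [hMcons1 ω hx]⟩, hx⟩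
  have hA0 : {ω | Y ω ∉ ya ∧ M ω ∈ ma} ∩ {ω | X ω = 0}
      = {ω | X ω = 0} ∩ {ω | Y0 ω ∉ ya ∧ M0 ω ∈ ma} := by
    ext ω
    simp only [Set.mem_inter_iff, Set.mem_setOf_eq]
    constructor
    · rintro ⟨⟨hy, hm⟩, hx⟩
      exact ⟨hx, by rwa [← hYcons0 ω hx], by rwa [← hMcons0 ω hx]⟩
    · rintro ⟨hx, hy, hm⟩
      exact ⟨⟨by rwa [hYcons0 ω hx], by rwa [hMcons0 ω hx]⟩, hx⟩
  have hAm : {ω | M ω ∈ ma} ∩ {ω | X ω = 0} = {ω | X ω = 0} ∩ {ω | M0 ω ∈ ma} := by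
    ext ω
    simp only [Set.mem_inter_iff, Set.mem_setOf_eq]
    constructor
    · rintro ⟨hm, hx⟩
      exact ⟨hx, by rwa [← hMcons0 ω hx]⟩
    · rintro ⟨hx, hm⟩
      exact ⟨by rwa [hMcons0 ω hx], hx⟩
  -- condP computations
  have c1 : condP μ {ω | Y ω ∉ ya ∧ M ω ∈ ma} {ω | X ω = 1}
      = (μ {ω | Y1 ω ∉ ya ∧ M1 ω ∈ ma}).toReal := by
    have hm := hind 1 yaᶜ Set.univ ma Set.univ {ω | Y1 ω ∉ ya ∧ M1 ω ∈ ma}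
      hya.compl MeasurableSet.univ hma MeasurableSet.univ (by ext ω; simp)
    unfold condP
    rw [hA1, hm, ENNReal.toReal_mul, mul_comm, mul_div_assoc, div_self hp1ne, mul_one]
  have c0 : condP μ {ω | Y ω ∉ ya ∧ M ω ∈ ma} {ω | X ω = 0}
      = (μ {ω | Y0 ω ∉ ya ∧ M0 ω ∈ ma}).toReal := by
    have hm := hind 0 Set.univ yaᶜ Set.univ ma {ω | Y0 ω ∉ ya ∧ M0 ω ∈ ma}
      MeasurableSet.univ hya.compl MeasurableSet.univ hma (by ext ω; simp)
    unfold condP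
    rw [hA0, hm, ENNReal.toReal_mul, mul_comm, mul_div_assoc, div_self hp0ne, mul_one]
  have cm : condP μ {ω | M ω ∈ ma} {ω | X ω = 0} = (μ {ω | M0 ω ∈ ma}).toReal := by
    have hm := hind 0 Set.univ Set.univ Set.univ ma {ω | M0 ω ∈ ma}
      MeasurableSet.univ MeasurableSet.univ MeasurableSet.univ hma (by ext ω; simp)
    unfold condP
    rw [hAm, hm, ENNReal.toReal_mul, mul_comm, mul_div_assoc, div_self hp0ne, mul_one]
  -- measurability of basic events
  have mY1 : MeasurableSet {ω | Y1 ω ∈ ya} := hY1meas hya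
  have mY0 : MeasurableSet {ω | Y0 ω ∈ ya} := hY0meas hya
  have mM1 : MeasurableSet {ω | M1 ω ∈ ma} := hM1meas hma
  -- splits
  have hP0 := split4' μ {ω | Y0 ω ∉ ya ∧ M0 ω ∈ ma} {ω | Y1 ω ∈ ya} {ω | M1 ω ∈ ma} mY1 mM1
  rw [show {ω | Y0 ω ∉ ya ∧ M0 ω ∈ ma} ∩ {ω | Y1 ω ∈ ya} ∩ {ω | M1 ω ∈ ma}
        = {ω | Y1 ω ∈ ya ∧ Y0 ω ∉ ya ∧ M1 ω ∈ ma ∧ M0 ω ∈ ma} from by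
      ext ω; simp only [Set.mem_inter_iff, Set.mem_compl_iff, Set.mem_setOf_eq]; tauto,
    show {ω | Y0 ω ∉ ya ∧ M0 ω ∈ ma} ∩ {ω | Y1 ω ∈ ya} ∩ {ω | M1 ω ∈ ma}ᶜ
        = {ω | Y1 ω ∈ ya ∧ Y0 ω ∉ ya ∧ M1 ω ∉ ma ∧ M0 ω ∈ ma} from by
      ext ω; simp only [Set.mem_inter_iff, Set.mem_compl_iff, Set.mem_setOf_eq]; tauto,
    show {ω | Y0 ω ∉ ya ∧ M0 ω ∈ ma} ∩ {ω | Y1 ω ∈ ya}ᶜ ∩ {ω | M1 ω ∈ ma}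
        = {ω | Y1 ω ∉ ya ∧ Y0 ω ∉ ya ∧ M1 ω ∈ ma ∧ M0 ω ∈ ma} from by
      ext ω; simp only [Set.mem_inter_iff, Set.mem_compl_iff, Set.mem_setOf_eq]; tauto,
    show {ω | Y0 ω ∉ ya ∧ M0 ω ∈ ma} ∩ {ω | Y1 ω ∈ ya}ᶜ ∩ {ω | M1 ω ∈ ma}ᶜ
        = {ω | Y1 ω ∉ ya ∧ Y0 ω ∉ ya ∧ M1 ω ∉ ma ∧ M0 ω ∈ ma} from by
      ext ω; simp only [Set.mem_inter_iff, Set.mem_compl_iff, Set.mem_setOf_eq]; tauto] at hP0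
  have hP1 := split4' μ {ω | Y1 ω ∉ ya ∧ M1 ω ∈ ma} {ω | Y0 ω ∈ ya} {ω | M0 ω ∈ ma} mY0 (hM0meas hma)
  rw [show {ω | Y1 ω ∉ ya ∧ M1 ω ∈ ma} ∩ {ω | Y0 ω ∈ ya} ∩ {ω | M0 ω ∈ ma}
        = {ω | Y1 ω ∉ ya ∧ Y0 ω ∈ ya ∧ M1 ω ∈ ma ∧ M0 ω ∈ ma} from by
      ext ω; simp only [Set.mem_inter_iff, Set.mem_compl_iff, Set.mem_setOf_eq]; tauto,
    show {ω | Y1 ω ∉ ya ∧ M1 ω ∈ ma} ∩ {ω | Y0 ω ∈ ya} ∩ {ω | M0 ω ∈ ma}ᶜ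
        = {ω | Y1 ω ∉ ya ∧ Y0 ω ∈ ya ∧ M1 ω ∈ ma ∧ M0 ω ∉ ma} from by
      ext ω; simp only [Set.mem_inter_iff, Set.mem_compl_iff, Set.mem_setOf_eq]; tauto,
    show {ω | Y1 ω ∉ ya ∧ M1 ω ∈ ma} ∩ {ω | Y0 ω ∈ ya}ᶜ ∩ {ω | M0 ω ∈ ma}
        = {ω | Y1 ω ∉ ya ∧ Y0 ω ∉ ya ∧ M1 ω ∈ ma ∧ M0 ω ∈ ma} from by
      ext ω; simp only [Set.mem_inter_iff, Set.mem_compl_iff, Set.mem_setOf_eq]; tauto,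
    show {ω | Y1 ω ∉ ya ∧ M1 ω ∈ ma} ∩ {ω | Y0 ω ∈ ya}ᶜ ∩ {ω | M0 ω ∈ ma}ᶜ
        = {ω | Y1 ω ∉ ya ∧ Y0 ω ∉ ya ∧ M1 ω ∈ ma ∧ M0 ω ∉ ma} from by
      ext ω; simp only [Set.mem_inter_iff, Set.mem_compl_iff, Set.mem_setOf_eq]; tauto] at hP1
  have hPm := split2' μ {ω | M0 ω ∈ ma} {ω | M1 ω ∈ ma} mM1
  rw [show {ω | M0 ω ∈ ma} ∩ {ω | M1 ω ∈ ma} = {ω | M1 ω ∈ ma} ∩ {ω | M0 ω ∈ ma} from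
      Set.inter_comm _ _,
    show {ω | M0 ω ∈ ma} ∩ {ω | M1 ω ∈ ma}ᶜ = {ω | M1 ω ∉ ma} ∩ {ω | M0 ω ∈ ma} from by
      ext ω; simp only [Set.mem_inter_iff, Set.mem_compl_iff, Set.mem_setOf_eq]; tauto] at hPm
  have part1 : condP μ {ω | Y ω ∉ ya ∧ M ω ∈ ma} {ω | X ω = 0}
      - condP μ {ω | Y ω ∉ ya ∧ M ω ∈ ma} {ω | X ω = 1} - r
      = (μ {ω | Y1 ω ∈ ya ∧ Y0 ω ∉ ya ∧ M1 ω ∈ ma ∧ M0 ω ∈ ma}).toReal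
        - (μ {ω | Y1 ω ∉ ya ∧ Y0 ω ∈ ya ∧ M1 ω ∈ ma ∧ M0 ω ∈ ma}).toReal := by
    rw [c0, c1, hr]
    linarith [hP0, hP1]
  refine ⟨part1, fun hpos => ?_⟩
  have hden : condP μ {ω | M ω ∈ ma} {ω | X ω = 0} - q
      = (μ ({ω | M1 ω ∈ ma} ∩ {ω | M0 ω ∈ ma})).toReal := by
    rw [cm, hq]
    linarith [hPm]
  refine ⟨by rw [part1, hden], ?_⟩
  unfold condP
  rw [show {ω | Y1 ω ∈ ya ∧ Y0 ω ∉ ya} ∩ {ω | M1 ω ∈ ma ∧ M0 ω ∈ ma}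
        = {ω | Y1 ω ∈ ya ∧ Y0 ω ∉ ya ∧ M1 ω ∈ ma ∧ M0 ω ∈ ma} from by
      ext ω; simp only [Set.mem_inter_iff, Set.mem_setOf_eq]; tauto,
    show {ω | Y1 ω ∉ ya ∧ Y0 ω ∈ ya} ∩ {ω | M1 ω ∈ ma ∧ M0 ω ∈ ma}
        = {ω | Y1 ω ∉ ya ∧ Y0 ω ∈ ya ∧ M1 ω ∈ ma ∧ M0 ω ∈ ma} from by
      ext ω; simp only [Set.mem_inter_iff, Set.mem_setOf_eq]; tauto,
    show ({ω | M1 ω ∈ ma} ∩ {ω | M0 ω ∈ ma}) = {ω | M1 ω ∈ ma ∧ M0 ω ∈ ma} from by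
      ext ω; simp only [Set.mem_inter_iff, Set.mem_setOf_eq],
    div_sub_div_same]
end
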